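/- arXiv:2403.11809 — 2 statements merged into one kernel-verified Lean document; each statement's English description precedes it below -/
import Mathlib

section
/- Let a < b be real numbers, let λ > 0, let κ > 0, and let f : [a, b] → ℝ be continuously differentiable with f′ monotone on [a, b] and |f′(t)| ≥ λ for all t ∈ [a, b]. Then |∫_a^b exp(i·κ·f(t)) dt| ≤ 3/(κ·λ). -/
/-!
With `g = 1 / f'`, the integrand is `(iκ)⁻¹ · (e^{iκf})' · g`. Since `f'` is continuous, monotone
and nonvanishing, it has constant sign, so `g` is monotone with `|g| ≤ 1 / L`. Integrating by
parts against the Stieltjes measure `dg` bounds the integral by `κ⁻¹` times the two boundary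
values of `g` plus its total variation `|g b - g a|`, each at most `1 / L`.
-/

open MeasureTheory intervalIntegral Set

theorem IsPreconnected.mul_pos_of_ne_zero {X : Type*} [TopologicalSpace X] {s : Set X}
    (hs : IsPreconnected s) {f : X → ℝ} (hf : ContinuousOn f s) (hf0 : ∀ x ∈ s, f x ≠ 0) :
    ∀ x ∈ s, ∀ y ∈ s, 0 < f x * f y := by
  intro x hx y hy
  by_contra! hxy
  have hzero : ∀ {u v}, u ∈ s → v ∈ s → f u ≤ 0 → 0 ≤ f v → False := fun hu hv hu0 hv0 => by
    obtain ⟨z, hz, hz0⟩ := hs.intermediate_value hu hv hf ⟨hu0, hv0⟩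
    exact hf0 z hz hz0
  rcases mul_nonpos_iff.1 hxy with ⟨hx0, hy0⟩ | ⟨hx0, hy0⟩
  · exact hzero hy hx hy0 hx0
  · exact hzero hx hy hx0 hy0

theorem inv_le_inv_of_le_of_mul_pos {x y : ℝ} (hxy : x ≤ y) (h : 0 < x * y) : y⁻¹ ≤ x⁻¹ := by
  have : y⁻¹ - x⁻¹ = (x - y) / (x * y) := by
    field_simp [left_ne_zero_of_mul h.ne', right_ne_zero_of_mul h.ne']
  linarith [div_nonpos_of_nonpos_of_nonneg (sub_nonpos.2 hxy) h.le]

theorem abs_sub_le_of_mul_pos {x y B : ℝ} (hx : |x| ≤ B) (hy : |y| ≤ B) (h : 0 < x * y) :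
    |x - y| ≤ B := by
  rw [abs_le] at *
  rcases pos_and_pos_or_neg_and_neg_of_mul_pos h with ⟨hx0, hy0⟩ | ⟨hx0, hy0⟩ <;>
    constructor <;> linarith

theorem MonotoneOn.antitoneOn_inv_of_mul_pos {s : Set ℝ} {f : ℝ → ℝ} (hf : MonotoneOn f s)
    (h : ∀ x ∈ s, ∀ y ∈ s, 0 < f x * f y) : AntitoneOn (fun x => (f x)⁻¹) s :=
  fun x hx y hy hxy => inv_le_inv_of_le_of_mul_pos (hf hx hy hxy) (h x hx y hy)

theorem AntitoneOn.monotoneOn_inv_of_mul_pos {s : Set ℝ} {f : ℝ → ℝ} (hf : AntitoneOn f s)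
    (h : ∀ x ∈ s, ∀ y ∈ s, 0 < f x * f y) : MonotoneOn (fun x => (f x)⁻¹) s :=
  fun x hx y hy hxy => inv_le_inv_of_le_of_mul_pos (hf hx hy hxy) (h y hy x hx)

theorem intervalIntegral.integral_eq_sub_of_hasDerivWithinAt_Icc {E : Type*}
    [NormedAddCommGroup E] [NormedSpace ℝ E] [CompleteSpace E] {F D : ℝ → E} {a b : ℝ}
    (hab : a ≤ b) (hF : ∀ t ∈ Icc a b, HasDerivWithinAt F (D t) (Icc a b) t)
    (hD : IntegrableOn D (Icc a b)) :
    ∫ t in a..b, D t = F b - F a :=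
  integral_eq_sub_of_hasDeriv_right_of_le hab (fun t ht => (hF t ht).continuousWithinAt)
    (fun t ht => (hF t (Ioo_subset_Icc_self ht)).mono_of_mem_nhdsWithin
      (Icc_mem_nhdsGT_of_mem (Ioo_subset_Ico_self ht)))
    ((intervalIntegrable_iff_integrableOn_Icc_of_le hab).2 hD)

section Stieltjes

variable (G : StieltjesFunction ℝ) {a b : ℝ} {F D : ℝ → ℂ}

instance StieltjesFunction.isFiniteMeasure_restrict_Ioc :
    IsFiniteMeasure (G.measure.restrict (Ioc a b)) :=
  isFiniteMeasure_restrict.2 (by simp [G.measure_Ioc])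

theorem StieltjesFunction.measureReal_Ioc (hab : a ≤ b) :
    G.measure.real (Ioc a b) = G b - G a := by
  rw [measureReal_def, G.measure_Ioc, ENNReal.toReal_ofReal (sub_nonneg.2 (G.mono hab))]

/-- Both sides are the integral of `D t` over `{a < t < s ≤ b}` against `dt ⊗ dG(s)`. -/
theorem StieltjesFunction.integral_Ioc_mul_sub_eq (hD : IntegrableOn D (Ioc a b))
    (hFD : ∀ s ∈ Ioc a b, ∫ t in a..s, D t = F s - F a) :
    ∫ t in Ioc a b, D t * ((G b - G t : ℝ) : ℂ) = ∫ s in Ioc a b, (F s - F a) ∂G.measure := by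
  set Φ : ℝ → ℝ → ℂ := fun t s => {p : ℝ × ℝ | p.1 < p.2}.indicator (fun p => D p.1) (t, s)
  have hΦ : Integrable (Function.uncurry Φ)
      ((volume.restrict (Ioc a b)).prod (G.measure.restrict (Ioc a b))) :=
    (hD.comp_fst _).indicator (measurableSet_lt measurable_fst measurable_snd)
  calc ∫ t in Ioc a b, D t * ((G b - G t : ℝ) : ℂ)
      = ∫ t in Ioc a b, ∫ s in Ioc a b, Φ t s ∂G.measure := by
        refine setIntegral_congr_fun measurableSet_Ioc fun t ht => ?_
        have hslice : Φ t = (Ioi t).indicator fun _ => D t := by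
          ext s; simp [Φ, Set.indicator]
        rw [hslice, integral_indicator_const _ _root_.measurableSet_Ioi,
          measureReal_restrict_apply _root_.measurableSet_Ioi, inter_comm, Ioc_inter_Ioi,
          sup_eq_right.2 ht.1.le, G.measureReal_Ioc ht.2, Complex.real_smul, mul_comm]
    _ = ∫ s in Ioc a b, ∫ t in Ioc a b, Φ t s ∂volume ∂G.measure := integral_integral_swap hΦ
    _ = ∫ s in Ioc a b, (F s - F a) ∂G.measure := by
        refine setIntegral_congr_fun measurableSet_Ioc fun s hs => ?_
        have hslice : (fun t => Φ t s) = (Iio s).indicator D := by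
          ext t; simp [Φ, Set.indicator]
        have hIoo : Iio s ∩ Ioc a b = Ioo a s := by ext; grind
        rw [hslice, MeasureTheory.integral_indicator _root_.measurableSet_Iio,
          Measure.restrict_restrict _root_.measurableSet_Iio, hIoo, ← integral_Ioc_eq_integral_Ioo,
          ← integral_of_le hs.1.le, hFD s hs]

theorem StieltjesFunction.integral_Ioc_mul_eq (hab : a ≤ b) (hD : IntegrableOn D (Icc a b))
    (hF : ∀ t ∈ Icc a b, HasDerivWithinAt F (D t) (Icc a b) t) :
    ∫ t in Ioc a b, D t * (G t : ℂ) =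
      G b * F b - G a * F a - ∫ s in Ioc a b, F s ∂G.measure := by
  have hDIoc : IntegrableOn D (Ioc a b) := hD.mono_set Ioc_subset_Icc_self
  have hFD : ∀ s ∈ Icc a b, ∫ t in a..s, D t = F s - F a := fun s hs =>
    integral_eq_sub_of_hasDerivWithinAt_Icc hs.1
      (fun t ht => (hF t ⟨ht.1, ht.2.trans hs.2⟩).mono (Icc_subset_Icc_right hs.2))
      (hD.mono_set (Icc_subset_Icc_right hs.2))
  have hFint : IntegrableOn F (Ioc a b) G.measure :=
    (ContinuousOn.integrableOn_Icc fun t ht => (hF t ht).continuousWithinAt).mono_set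
      Ioc_subset_Icc_self
  have hDG : IntegrableOn (fun t => D t * ((G b - G t : ℝ) : ℂ)) (Ioc a b) := by
    refine hDIoc.mul_bdd (c := G b - G a) (Complex.measurable_ofReal.comp
      (measurable_const.sub G.mono.measurable)).aestronglyMeasurable
      (ae_restrict_of_forall_mem measurableSet_Ioc fun t ht => ?_)
    rw [Complex.norm_real, Real.norm_of_nonneg (sub_nonneg.2 (G.mono ht.2))]
    exact sub_le_sub_left (G.mono ht.1.le) _
  calc ∫ t in Ioc a b, D t * (G t : ℂ)
      = ∫ t in Ioc a b, ((G b : ℂ) * D t - D t * ((G b - G t : ℝ) : ℂ)) := by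
        refine setIntegral_congr_fun measurableSet_Ioc fun t _ => ?_
        push_cast; ring
    _ = G b * (F b - F a) - ∫ s in Ioc a b, (F s - F a) ∂G.measure := by
        rw [integral_sub (hDIoc.const_mul _) hDG, MeasureTheory.integral_const_mul,
          ← integral_of_le hab, hFD b ⟨hab, le_rfl⟩,
          G.integral_Ioc_mul_sub_eq hDIoc fun s hs => hFD s (Ioc_subset_Icc_self hs)]
    _ = G b * F b - G a * F a - ∫ s in Ioc a b, F s ∂G.measure := by
        rw [integral_sub hFint (integrable_const _), setIntegral_const, G.measureReal_Ioc hab,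
          Complex.real_smul]
        push_cast; ring

theorem StieltjesFunction.norm_integral_Ioc_mul_le (hab : a ≤ b) (hD : IntegrableOn D (Icc a b))
    (hF : ∀ t ∈ Icc a b, HasDerivWithinAt F (D t) (Icc a b) t)
    (hF1 : ∀ t ∈ Icc a b, ‖F t‖ ≤ 1) :
    ‖∫ t in Ioc a b, D t * (G t : ℂ)‖ ≤ |G a| + |G b| + (G b - G a) := by
  have hFG : ‖∫ s in Ioc a b, F s ∂G.measure‖ ≤ G b - G a := by
    calc _ ≤ 1 * G.measure.real (Ioc a b) := norm_setIntegral_le_of_norm_le_const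
          measure_Ioc_lt_top fun t ht => hF1 t (Ioc_subset_Icc_self ht)
      _ = G b - G a := by rw [one_mul, G.measureReal_Ioc hab]
  have hboundary : ∀ t ∈ Icc a b, ‖(G t : ℂ) * F t‖ ≤ |G t| := fun t ht => by
    rw [norm_mul, Complex.norm_real, Real.norm_eq_abs]
    exact mul_le_of_le_one_right (abs_nonneg _) (hF1 t ht)
  rw [G.integral_Ioc_mul_eq hab hD hF]
  calc _ ≤ ‖(G b : ℂ) * F b‖ + ‖(G a : ℂ) * F a‖ + ‖∫ s in Ioc a b, F s ∂G.measure‖ :=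
        norm_sub_le_of_le (norm_sub_le _ _) le_rfl
    _ ≤ |G a| + |G b| + (G b - G a) := by
        linarith [hboundary a ⟨le_rfl, hab⟩, hboundary b ⟨hab, le_rfl⟩]

end Stieltjes

theorem MonotoneOn.exists_stieltjesFunction_eqOn {a b : ℝ} (hab : a ≤ b) {g : ℝ → ℝ}
    (hg : MonotoneOn g (Icc a b)) (hgc : ContinuousOn g (Icc a b)) :
    ∃ G : StieltjesFunction ℝ, EqOn G g (Icc a b) := by
  refine ⟨⟨fun t => g (projIcc a b hab t), fun x y hxy => hg (projIcc a b hab x).2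
    (projIcc a b hab y).2 (monotone_projIcc hab hxy), fun t => ?_⟩, fun t ht => ?_⟩
  · exact (hgc.comp_continuous (continuous_subtype_val.comp continuous_projIcc)
      fun t => (projIcc a b hab t).2).continuousWithinAt
  · simp [projIcc_of_mem hab ht]

section Monotone

variable {a b : ℝ} {F D : ℝ → ℂ} {g : ℝ → ℝ}

theorem norm_integral_mul_le_of_monotoneOn (hab : a ≤ b) (hg : MonotoneOn g (Icc a b))
    (hgc : ContinuousOn g (Icc a b)) (hD : IntegrableOn D (Icc a b))
    (hF : ∀ t ∈ Icc a b, HasDerivWithinAt F (D t) (Icc a b) t)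
    (hF1 : ∀ t ∈ Icc a b, ‖F t‖ ≤ 1) :
    ‖∫ t in a..b, D t * (g t : ℂ)‖ ≤ |g a| + |g b| + (g b - g a) := by
  obtain ⟨G, hG⟩ := hg.exists_stieltjesFunction_eqOn hab hgc
  have hGg : ∫ t in a..b, D t * (g t : ℂ) = ∫ t in Ioc a b, D t * (G t : ℂ) := by
    rw [integral_of_le hab]
    exact setIntegral_congr_fun measurableSet_Ioc fun t ht => by
      rw [hG (Ioc_subset_Icc_self ht)]
  rw [hGg, ← hG ⟨le_rfl, hab⟩, ← hG ⟨hab, le_rfl⟩]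
  exact G.norm_integral_Ioc_mul_le hab hD hF hF1

theorem norm_integral_mul_le_of_monotoneOn_or_antitoneOn (hab : a ≤ b)
    (hg : MonotoneOn g (Icc a b) ∨ AntitoneOn g (Icc a b)) (hgc : ContinuousOn g (Icc a b))
    (hD : IntegrableOn D (Icc a b)) (hF : ∀ t ∈ Icc a b, HasDerivWithinAt F (D t) (Icc a b) t)
    (hF1 : ∀ t ∈ Icc a b, ‖F t‖ ≤ 1) :
    ‖∫ t in a..b, D t * (g t : ℂ)‖ ≤ |g a| + |g b| + |g b - g a| := by
  rcases hg with hg | hg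
  · linarith [norm_integral_mul_le_of_monotoneOn hab hg hgc hD hF hF1, le_abs_self (g b - g a)]
  · have := norm_integral_mul_le_of_monotoneOn hab hg.neg hgc.neg hD hF hF1
    simp only [Complex.ofReal_neg, mul_neg, intervalIntegral.integral_neg, norm_neg,
      abs_neg] at this
    linarith [neg_abs_le (g b - g a)]

end Monotone

/-- first-order van der Corput (non-stationary phase) estimate:
if `f` is continuously differentiable on `[a, b]` with monotone derivative
bounded below in absolute value by `L > 0`, then the oscillatory integral is
bounded by `3 / (κ * L)`. -/
theorem stmt_5 (a b : ℝ) (hab : a < b) (L : ℝ) (hL : 0 < L) (κ : ℝ) (hκ : 0 < κ)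
    (f f' : ℝ → ℝ)
    (hderiv : ∀ t ∈ Set.Icc a b, HasDerivWithinAt f (f' t) (Set.Icc a b) t)
    (hcont : ContinuousOn f' (Set.Icc a b))
    (hmono : MonotoneOn f' (Set.Icc a b) ∨ AntitoneOn f' (Set.Icc a b))
    (hlb : ∀ t ∈ Set.Icc a b, L ≤ |f' t|) :
    ‖∫ t in a..b, Complex.exp (Complex.I * (κ : ℂ) * (f t : ℂ))‖ ≤
      3 / (κ * L) := by
  have hf'0 : ∀ t ∈ Icc a b, f' t ≠ 0 := fun t ht => abs_pos.1 (hL.trans_le (hlb t ht))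
  have hsign := isPreconnected_Icc.mul_pos_of_ne_zero hcont hf'0
  set g : ℝ → ℝ := fun t => (f' t)⁻¹
  have hg : MonotoneOn g (Icc a b) ∨ AntitoneOn g (Icc a b) :=
    hmono.symm.imp (·.monotoneOn_inv_of_mul_pos hsign) (·.antitoneOn_inv_of_mul_pos hsign)
  have hgL : ∀ t ∈ Icc a b, |g t| ≤ L⁻¹ := fun t ht => by
    rw [abs_inv]; exact inv_anti₀ hL (hlb t ht)
  have hgab : |g b - g a| ≤ L⁻¹ :=
    abs_sub_le_of_mul_pos (hgL b ⟨hab.le, le_rfl⟩) (hgL a ⟨le_rfl, hab.le⟩)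
      (by simpa only [g, ← mul_inv, inv_pos] using hsign b ⟨hab.le, le_rfl⟩ a ⟨le_rfl, hab.le⟩)
  set F : ℝ → ℂ := fun t => Complex.exp (Complex.I * κ * f t)
  set D : ℝ → ℂ := fun t => F t * (Complex.I * κ * f' t)
  have hF : ∀ t ∈ Icc a b, HasDerivWithinAt F (D t) (Icc a b) t := fun t ht =>
    ((hderiv t ht).ofReal_comp.const_mul (Complex.I * κ)).cexp
  have hD : ContinuousOn D (Icc a b) := (HasDerivWithinAt.continuousOn hF).mul (by fun_prop)
  have hF1 : ∀ t, ‖F t‖ = 1 := fun t => by simp [F, Complex.norm_exp]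
  have hFD : ∫ t in a..b, F t = (Complex.I * κ)⁻¹ * ∫ t in a..b, D t * (g t : ℂ) := by
    rw [← intervalIntegral.integral_const_mul]
    refine integral_congr fun t ht => ?_
    have : (f' t : ℂ) ≠ 0 := by exact_mod_cast hf'0 t (uIcc_of_le hab.le ▸ ht)
    have : (κ : ℂ) ≠ 0 := by exact_mod_cast hκ.ne'
    simp only [D, g, Complex.ofReal_inv]
    field_simp
  have hbound := norm_integral_mul_le_of_monotoneOn_or_antitoneOn hab.le hg
    (hcont.inv₀ hf'0) hD.integrableOn_Icc hF fun t _ => (hF1 t).le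
  rw [hFD, norm_mul, norm_inv, norm_mul, Complex.norm_I, one_mul, Complex.norm_real,
    Real.norm_of_nonneg hκ.le]
  calc κ⁻¹ * ‖∫ t in a..b, D t * (g t : ℂ)‖ ≤ κ⁻¹ * (3 * L⁻¹) := by
        gcongr; linarith [hgL a ⟨le_rfl, hab.le⟩, hgL b ⟨hab.le, le_rfl⟩]
    _ = 3 / (κ * L) := by field_simp
end

section
/- Let p, q ∈ ℝ² be distinct points whose second coordinates are strictly positive (i.e., both lie in the open upper half-plane), and let a < b be real numbers. Then lim_{κ → ∞} ∫_a^b exp(i·κ·(‖p − (t, 0)‖ − ‖q − (t, 0)‖)) / ‖p − (t, 0)‖ dt = 0, where the limit is taken over real κ tending to +∞. -/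
/-!
Integrating by parts against `d(e^{iκφ}) = iκ φ' e^{iκφ} dt` shows that an oscillatory integral
`∫ e^{iκφ} A` is `O(1/κ)` on any interval free of zeros of `φ'`. For the phase
`φ t = ‖p - (t, 0)‖ - ‖q - (t, 0)‖`, a zero of `φ'` is a point of the axis collinear with `p` and
`q`, so there is at most one; near it the integrand stays bounded, so a short interval around it
costs little uniformly in `κ`.
-/

open MeasureTheory intervalIntegral Filter

/-- The point `(t, 0)` of the x-axis, viewed in the Euclidean plane. -/
noncomputable def xAxisPoint (t : ℝ) : EuclideanSpace ℝ (Fin 2) :=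
  (WithLp.equiv 2 (Fin 2 → ℝ)).symm ![t, 0]

open Complex Set
open scoped Interval Topology

section Oscillatory

variable {a b : ℝ} {φ : ℝ → ℝ} {A : ℝ → ℂ}

theorem norm_cexp_I_mul_ofReal_mul_ofReal (κ x : ℝ) : ‖cexp (I * κ * x)‖ = 1 := by
  simpa [mul_comm, mul_left_comm] using norm_exp_ofReal_mul_I (κ * x)

theorem intervalIntegrable_cexp_mul (hφ : Continuous φ) (hA : Continuous A) (κ x y : ℝ) :
    IntervalIntegrable (fun t => cexp (I * κ * φ t) * A t) volume x y :=
  (by fun_prop : Continuous fun t => cexp (I * κ * φ t) * A t).intervalIntegrable x y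

theorem norm_integral_cexp_mul_le {φ' : ℝ → ℝ} {G G' : ℝ → ℂ}
    (hφ : ∀ t ∈ [[a, b]], HasDerivAt φ (φ' t) t) (hφ' : ContinuousOn φ' [[a, b]])
    (hG : ∀ t ∈ [[a, b]], HasDerivAt G (G' t) t) (hG' : ContinuousOn G' [[a, b]])
    {κ : ℝ} (hκ : 0 < κ) :
    ‖∫ t in a..b, cexp (I * κ * φ t) * (G t * φ' t)‖ ≤
      (‖G b‖ + ‖G a‖ + |∫ t in a..b, ‖G' t‖|) / κ := by
  set v : ℝ → ℂ := fun t => cexp (I * κ * φ t)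
  have hv : ∀ t ∈ [[a, b]], HasDerivAt v (v t * (I * κ * φ' t)) t := fun t ht =>
    ((hφ t ht).ofReal_comp.const_mul (I * κ)).cexp
  have hv' : ContinuousOn (fun t => v t * (I * κ * φ' t)) [[a, b]] :=
    (continuousOn_of_forall_continuousAt fun t ht => (hv t ht).continuousAt).mul
      (continuousOn_const.mul (continuous_ofReal.comp_continuousOn hφ'))
  have hibp := integral_mul_deriv_eq_deriv_mul hG hv hG'.intervalIntegrable hv'.intervalIntegrable
  have hlhs : ∫ t in a..b, G t * (v t * (I * κ * φ' t)) =
      I * κ * ∫ t in a..b, v t * (G t * φ' t) := by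
    rw [← intervalIntegral.integral_const_mul]
    congr 1 with t
    ring
  have hκI : ‖I * (κ : ℂ)‖ = κ := by simp [hκ.le]
  rw [le_div_iff₀ hκ, mul_comm]
  nth_rw 1 [← hκI]
  rw [← norm_mul, ← hlhs, hibp]
  calc ‖G b * v b - G a * v a - ∫ t in a..b, G' t * v t‖
      ≤ ‖G b * v b‖ + ‖G a * v a‖ + ‖∫ t in a..b, G' t * v t‖ :=
        (norm_sub_le _ _).trans (by gcongr; exact norm_sub_le _ _)
    _ ≤ ‖G b‖ + ‖G a‖ + |∫ t in a..b, ‖G' t‖| := by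
      simp only [v, norm_mul, norm_cexp_I_mul_ofReal_mul_ofReal, mul_one]
      gcongr
      refine norm_integral_le_abs_integral_norm.trans_eq ?_
      simp only [norm_mul, norm_cexp_I_mul_ofReal_mul_ofReal, mul_one]

theorem tendsto_integral_cexp_mul_of_deriv_ne_zero (hφ : ContDiff ℝ 2 φ) (hA : ContDiff ℝ 1 A)
    (hφ' : ∀ t ∈ [[a, b]], deriv φ t ≠ 0) :
    Tendsto (fun κ : ℝ => ∫ t in a..b, cexp (I * κ * φ t) * A t) atTop (𝓝 0) := by
  obtain ⟨hφ_diff, -, hφ'_diff⟩ := (contDiff_succ_iff_deriv (n := 1)).1 hφ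
  have hne : ∀ t ∈ [[a, b]], ((deriv φ t : ℝ) : ℂ) ≠ 0 := fun t ht => ofReal_ne_zero.2 (hφ' t ht)
  set G : ℝ → ℂ := fun t => A t / deriv φ t
  set G' : ℝ → ℂ := fun t =>
    (deriv A t * deriv φ t - A t * deriv (deriv φ) t) / ((deriv φ t : ℝ) : ℂ) ^ 2
  have hG : ∀ t ∈ [[a, b]], HasDerivAt G (G' t) t := fun t ht =>
    (hA.differentiable one_ne_zero t).hasDerivAt.div
      (hφ'_diff.differentiable one_ne_zero t).hasDerivAt.ofReal_comp (hne t ht)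
  have hG' : ContinuousOn G' [[a, b]] := by
    have hφ'c := continuous_ofReal.comp hφ'_diff.continuous
    have hφ''c := continuous_ofReal.comp hφ'_diff.continuous_deriv_one
    exact ((hA.continuous_deriv_one.mul hφ'c).sub (hA.continuous.mul hφ''c)).continuousOn.div
      (hφ'c.pow 2).continuousOn fun t ht => pow_ne_zero 2 (hne t ht)
  refine squeeze_zero_norm' (a := fun κ => (‖G b‖ + ‖G a‖ + |∫ t in a..b, ‖G' t‖|) / κ) ?_
    (tendsto_const_nhds.div_atTop tendsto_id)
  filter_upwards [eventually_gt_atTop 0] with κ hκ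
  have hA_eq : ∫ t in a..b, cexp (I * κ * φ t) * A t =
      ∫ t in a..b, cexp (I * κ * φ t) * (G t * deriv φ t) :=
    integral_congr fun t ht => by simp only [G, div_mul_cancel₀ _ (hne t ht)]
  rw [hA_eq]
  exact norm_integral_cexp_mul_le (fun t _ => (hφ_diff t).hasDerivAt)
    hφ'_diff.continuous.continuousOn hG hG' hκ

theorem tendsto_integral_cexp_mul_of_deriv_ne_zero_of_ne_left (hφ : ContDiff ℝ 2 φ)
    (hA : ContDiff ℝ 1 A) (hφ' : ∀ t ∈ [[a, b]], t ≠ a → deriv φ t ≠ 0) :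
    Tendsto (fun κ : ℝ => ∫ t in a..b, cexp (I * κ * φ t) * A t) atTop (𝓝 0) := by
  rcases eq_or_ne a b with rfl | hab
  · simp
  obtain ⟨M, hM⟩ := isCompact_uIcc.exists_bound_of_continuousOn hA.continuous.continuousOn
  rw [Metric.tendsto_nhds]
  intro ε hε
  obtain ⟨s, ⟨hs1, hsM⟩, hs0⟩ : ∃ s, (s ≤ 1 ∧ M * |s * (b - a)| < ε / 2) ∧ 0 < s := by
    have hsmall : ∀ᶠ s in 𝓝 (0 : ℝ), s ≤ 1 ∧ M * |s * (b - a)| < ε / 2 :=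
      (eventually_le_nhds one_pos).and <|
        (by fun_prop : Continuous fun s : ℝ => M * |s * (b - a)|).continuousAt.eventually_lt
          continuousAt_const (by simpa using half_pos hε)
    exact ((hsmall.filter_mono (nhdsWithin_le_nhds (s := Ioi 0))).and self_mem_nhdsWithin).exists
  set c := a + s * (b - a)
  have hc : c ∈ [[a, b]] := by
    rcases le_total a b with h | h
    · exact mem_uIcc_of_le (by nlinarith) (by nlinarith)
    · exact mem_uIcc_of_ge (by nlinarith) (by nlinarith)
  have hca : c ≠ a := by simpa [c, hs0.ne'] using sub_ne_zero.2 hab.symm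
  have htail := tendsto_integral_cexp_mul_of_deriv_ne_zero (a := c) (b := b) hφ hA
    fun t ht => hφ' t (uIcc_subset_uIcc hc right_mem_uIcc ht) fun hta =>
      hca (eq_of_mem_uIcc_of_mem_uIcc (hta ▸ ht) hc).symm
  filter_upwards [(Metric.tendsto_nhds.1 htail) (ε / 2) (half_pos hε)] with κ hκ
  have hint := intervalIntegrable_cexp_mul hφ.continuous hA.continuous κ
  have hhead : ‖∫ t in a..c, cexp (I * κ * φ t) * A t‖ ≤ M * |c - a| :=
    norm_integral_le_of_norm_le_const fun t ht => by
      rw [norm_mul, norm_cexp_I_mul_ofReal_mul_ofReal, one_mul]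
      exact hM t (uIcc_subset_uIcc left_mem_uIcc hc (uIoc_subset_uIcc ht))
  rw [dist_zero_right] at hκ ⊢
  rw [← integral_add_adjacent_intervals (hint a c) (hint c b)]
  calc _ ≤ _ := norm_add_le _ _
    _ < ε := by simp only [c, add_sub_cancel_left] at hhead; linarith

theorem tendsto_integral_cexp_mul_of_subsingleton (hφ : ContDiff ℝ 2 φ) (hA : ContDiff ℝ 1 A)
    (hφ' : {t ∈ [[a, b]] | deriv φ t = 0}.Subsingleton) :
    Tendsto (fun κ : ℝ => ∫ t in a..b, cexp (I * κ * φ t) * A t) atTop (𝓝 0) := by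
  by_cases hstat : ∃ t₀ ∈ [[a, b]], deriv φ t₀ = 0
  · obtain ⟨t₀, ht₀, hφt₀⟩ := hstat
    have hne : ∀ t ∈ [[a, b]], t ≠ t₀ → deriv φ t ≠ 0 := fun t ht htt₀ hφt =>
      htt₀ (hφ' ⟨ht, hφt⟩ ⟨ht₀, hφt₀⟩)
    have hleft := tendsto_integral_cexp_mul_of_deriv_ne_zero_of_ne_left (a := t₀) (b := a) hφ hA
      fun t ht => hne t (uIcc_subset_uIcc ht₀ left_mem_uIcc ht)
    have hright := tendsto_integral_cexp_mul_of_deriv_ne_zero_of_ne_left (a := t₀) (b := b) hφ hA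
      fun t ht => hne t (uIcc_subset_uIcc ht₀ right_mem_uIcc ht)
    have hsplit : ∀ κ : ℝ, ∫ t in a..b, cexp (I * κ * φ t) * A t =
        -(∫ t in t₀..a, cexp (I * κ * φ t) * A t) + ∫ t in t₀..b, cexp (I * κ * φ t) * A t :=
      fun κ => by
        have hint := intervalIntegrable_cexp_mul hφ.continuous hA.continuous κ
        rw [← integral_add_adjacent_intervals (hint a t₀) (hint t₀ b), integral_symm t₀ a]
    simpa only [hsplit, neg_zero, add_zero] using hleft.neg.add hright
  · exact tendsto_integral_cexp_mul_of_deriv_ne_zero hφ hA fun t ht hφt => hstat ⟨t, ht, hφt⟩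

end Oscillatory

section UpperHalfPlane

variable {p q : EuclideanSpace ℝ (Fin 2)}

theorem norm_sub_xAxisPoint (p : EuclideanSpace ℝ (Fin 2)) (t : ℝ) :
    ‖p - xAxisPoint t‖ = √((t - p 0) ^ 2 + p 1 ^ 2) := by
  simp [EuclideanSpace.norm_eq, Fin.sum_univ_two, xAxisPoint, sub_sq_comm (p 0)]

theorem norm_sub_xAxisPoint_pos (hp : p 1 ≠ 0) (t : ℝ) : 0 < ‖p - xAxisPoint t‖ := by
  rw [norm_sub_xAxisPoint]
  positivity

theorem contDiff_norm_sub_xAxisPoint (hp : p 1 ≠ 0) {n : WithTop ℕ∞} :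
    ContDiff ℝ n fun t => ‖p - xAxisPoint t‖ := by
  simp only [norm_sub_xAxisPoint]
  exact ContDiff.sqrt (by fun_prop) fun t => by positivity

theorem hasDerivAt_norm_sub_xAxisPoint (hp : p 1 ≠ 0) (t : ℝ) :
    HasDerivAt (fun t => ‖p - xAxisPoint t‖) ((t - p 0) / ‖p - xAxisPoint t‖) t := by
  have hpos : (t - p 0) ^ 2 + p 1 ^ 2 ≠ 0 := by positivity
  have h : HasDerivAt (fun s => (s - p 0) ^ 2 + p 1 ^ 2) (2 * (t - p 0)) t := by
    simpa using (((hasDerivAt_id t).sub_const (p 0)).fun_pow 2).add_const (p 1 ^ 2)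
  simp only [norm_sub_xAxisPoint]
  convert h.sqrt hpos using 1
  field_simp

/-- The hypothesis says that the unit vectors from `(t, 0)` to `p` and to `q` have the same first
coordinate; both point into the upper half-plane, so they are equal and `(t, 0)`, `p`, `q` are
collinear. -/
theorem sub_mul_eq_sub_mul_of_div_norm_eq (hp : 0 < p 1) (hq : 0 < q 1) {t : ℝ}
    (h : (t - p 0) / ‖p - xAxisPoint t‖ = (t - q 0) / ‖q - xAxisPoint t‖) :
    (t - p 0) * q 1 = (t - q 0) * p 1 := by
  have hrp := norm_sub_xAxisPoint_pos hp.ne' t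
  have hrq := norm_sub_xAxisPoint_pos hq.ne' t
  have hrp_sq : ‖p - xAxisPoint t‖ ^ 2 = (t - p 0) ^ 2 + p 1 ^ 2 := by
    rw [norm_sub_xAxisPoint, Real.sq_sqrt (by positivity)]
  have hrq_sq : ‖q - xAxisPoint t‖ ^ 2 = (t - q 0) ^ 2 + q 1 ^ 2 := by
    rw [norm_sub_xAxisPoint, Real.sq_sqrt (by positivity)]
  rw [div_eq_div_iff hrp.ne' hrq.ne'] at h
  have hsecond : p 1 * ‖q - xAxisPoint t‖ = q 1 * ‖p - xAxisPoint t‖ := by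
    refine (sq_eq_sq₀ (by positivity) (by positivity)).1 ?_
    linear_combination (p 1 ^ 2 + (t - p 0) ^ 2) * hrq_sq - (q 1 ^ 2 + (t - q 0) ^ 2) * hrp_sq
      - ((t - p 0) * ‖q - xAxisPoint t‖ + (t - q 0) * ‖p - xAxisPoint t‖) * h
  refine mul_right_cancel₀ hrp.ne' ?_
  linear_combination -(t - p 0) * hsecond + p 1 * h

theorem subsingleton_deriv_norm_sub_norm_eq_zero (hpq : p ≠ q) (hp : 0 < p 1) (hq : 0 < q 1) :
    {t | deriv (fun t => ‖p - xAxisPoint t‖ - ‖q - xAxisPoint t‖) t = 0}.Subsingleton := by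
  have hcollinear : ∀ t, deriv (fun t => ‖p - xAxisPoint t‖ - ‖q - xAxisPoint t‖) t = 0 →
      (t - p 0) * q 1 = (t - q 0) * p 1 := fun t ht =>
    sub_mul_eq_sub_mul_of_div_norm_eq hp hq <| sub_eq_zero.1 <| by
      rwa [((hasDerivAt_norm_sub_xAxisPoint hp.ne' t).fun_sub
        (hasDerivAt_norm_sub_xAxisPoint hq.ne' t)).deriv] at ht
  intro s hs t ht
  have hst := hcollinear s hs
  have htt := hcollinear t ht
  by_contra hne
  have h1 : p 1 = q 1 :=
    (mul_left_cancel₀ (sub_ne_zero.2 hne) (by linear_combination hst - htt)).symm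
  have h0 : p 0 = q 0 := by
    have := mul_right_cancel₀ hq.ne' (h1 ▸ hst)
    linarith
  exact hpq (by ext i; fin_cases i <;> assumption)

end UpperHalfPlane

theorem stmt_6_general (p q : EuclideanSpace ℝ (Fin 2)) (hpq : p ≠ q)
    (hp : 0 < p 1) (hq : 0 < q 1) (a b : ℝ) :
    Tendsto
      (fun κ : ℝ => ∫ t in a..b,
        Complex.exp (Complex.I * (κ : ℂ) *
            ((‖p - xAxisPoint t‖ : ℝ) - (‖q - xAxisPoint t‖ : ℝ)))
          / ((‖p - xAxisPoint t‖ : ℝ) : ℂ))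
      atTop (nhds 0) := by
  have hφ : ContDiff ℝ 2 fun t => ‖p - xAxisPoint t‖ - ‖q - xAxisPoint t‖ :=
    (contDiff_norm_sub_xAxisPoint hp.ne').sub (contDiff_norm_sub_xAxisPoint hq.ne')
  have hA : ContDiff ℝ 1 fun t => ((‖p - xAxisPoint t‖⁻¹ : ℝ) : ℂ) :=
    ofRealCLM.contDiff.comp <| (contDiff_norm_sub_xAxisPoint hp.ne').inv fun t =>
      (norm_sub_xAxisPoint_pos hp.ne' t).ne'
  have hS : {t ∈ [[a, b]] |
      deriv (fun t => ‖p - xAxisPoint t‖ - ‖q - xAxisPoint t‖) t = 0}.Subsingleton :=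
    (subsingleton_deriv_norm_sub_norm_eq_zero hpq hp hq).anti fun _ ht => ht.2
  simpa [div_eq_mul_inv] using tendsto_integral_cexp_mul_of_subsingleton hφ hA hS

/-- for distinct points `p ≠ q` of the open upper half-plane, the
continuous-aperture time-inversion desired term evaluated at `q` vanishes as
the wavenumber `κ → ∞`. -/
theorem stmt_6 (p q : EuclideanSpace ℝ (Fin 2)) (hpq : p ≠ q)
    (hp : 0 < p 1) (hq : 0 < q 1) (a b : ℝ) (hab : a < b) :
    Tendsto
      (fun κ : ℝ => ∫ t in a..b,
        Complex.exp (Complex.I * (κ : ℂ) *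
            ((‖p - xAxisPoint t‖ : ℝ) - (‖q - xAxisPoint t‖ : ℝ)))
          / ((‖p - xAxisPoint t‖ : ℝ) : ℂ))
      atTop (nhds 0) :=
  stmt_6_general p q hpq hp hq a b
end
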